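/- Every tuple of osculating paths in [1,a]×[1,b] is uniquely determined by its vacancy-osculation set: the map P ↦ Z(P) = N(P) ∪ X(P) from OP(a,b) to subsets of [1,a]×[1,b] is injective. -/

import Mathlib

/-- A unit step rightwards `(0,1)` or upwards `(-1,0)` (matrix coordinates). -/
def IsStep (x y : ℤ × ℤ) : Prop := y = (x.1, x.2 + 1) ∨ y = (x.1 - 1, x.2)

/-- `p` is a path from `s` to `t` taking only steps `(0,1)` or `(-1,0)`. -/
def IsPathFT (p : List (ℤ × ℤ)) (s t : ℤ × ℤ) : Prop :=
  p.head? = some s ∧ p.getLast? = some t ∧ p.Chain' IsStep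

/-- Paths `P` (the lower path) and `Q` (the upper path) osculate: at any shared
point the local configuration is fixed, so they neither cross nor share edges. -/
def Osc (P Q : List (ℤ × ℤ)) : Prop :=
  ∀ l l' : ℕ, l < P.length → l' < Q.length →
    P.getD l (0, 0) = Q.getD l' (0, 0) →
      0 < l ∧ l + 1 < P.length ∧
      P.getD (l - 1) (0, 0) = ((P.getD l (0, 0)).1, (P.getD l (0, 0)).2 - 1) ∧
      P.getD (l + 1) (0, 0) = ((P.getD l (0, 0)).1 - 1, (P.getD l (0, 0)).2) ∧
      (0 < l' → Q.getD (l' - 1) (0, 0) = ((P.getD l (0, 0)).1 + 1, (P.getD l (0, 0)).2)) ∧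
      (l' + 1 < Q.length → Q.getD (l' + 1) (0, 0) = ((P.getD l (0, 0)).1, (P.getD l (0, 0)).2 + 1))

/-- `P` is a tuple of osculating paths in the `a × b` rectangle with boundary pair `(α,β)`:
the `k`-th path runs from `(a, β_k)` to `(α_k, b)` and consecutive paths osculate. -/
def IsOscTuple (a b : ℕ) (α β : Finset ℕ) (P : List (List (ℤ × ℤ))) : Prop :=
  α ⊆ Finset.Icc 1 a ∧ β ⊆ Finset.Icc 1 b ∧ α.card = β.card ∧ P.length = α.card ∧
  (∀ k : ℕ, k < P.length →
    IsPathFT (P.getD k []) ((a : ℤ), (((β.sort (· ≤ ·)).getD k 0 : ℕ) : ℤ))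
      ((((α.sort (· ≤ ·)).getD k 0 : ℕ) : ℤ), (b : ℤ))) ∧
  (∀ k : ℕ, k + 1 < P.length → Osc (P.getD k []) (P.getD (k + 1) []))

/-- The set of lattice points of the `a × b` rectangle. -/
def rectZ (a b : ℕ) : Set (ℤ × ℤ) :=
  {v | 1 ≤ v.1 ∧ v.1 ≤ (a : ℤ) ∧ 1 ≤ v.2 ∧ v.2 ≤ (b : ℤ)}

/-- The number of paths of the tuple `P` passing through the point `v`. -/
noncomputable def passCount (P : List (List (ℤ × ℤ))) (v : ℤ × ℤ) : ℕ :=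
  {k : ℕ | k < P.length ∧ v ∈ P.getD k []}.ncard

/-- The vacancy-osculation set of `P`: points through which zero or two paths pass. -/
def Zset (a b : ℕ) (P : List (List (ℤ × ℤ))) : Set (ℤ × ℤ) :=
  {v ∈ rectZ a b | passCount P v = 0 ∨ passCount P v = 2}

/-!
Every step of a path raises the diagonal `j - i` of its point by one, so a path meets each
diagonal at most once, and a tuple can be reconstructed diagonal by diagonal, and on each
diagonal path by path. Suppose everything is known on diagonal `d` and for the paths before `k`
on diagonal `d + 1`. If path `k` has not met diagonal `d`, its only possible point on `d + 1` is
its starting point; otherwise it moves north or east from its point on `d`. No later path can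
pass through the starting point, resp. the north point, and at most two paths pass through any
point, so membership of that point in `Z` decides whether path `k` passes through it. A path
that does not go north goes east unless it has reached the last column.
-/

def diag (v : ℤ × ℤ) : ℤ := v.2 - v.1

theorem IsStep.diag_eq {v w : ℤ × ℤ} (h : IsStep v w) : diag w = diag v + 1 := by
  rcases h with rfl | rfl <;> simp only [diag] <;> ring

theorem List.lt_length_of_mem_getD {α : Type*} {L : List (List α)} {k : ℕ} {x : α}
    (hx : x ∈ L.getD k []) : k < L.length := by
  by_contra hk
  rw [List.getD_eq_default _ _ (by omega)] at hx
  simp at hx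

namespace IsPathFT

variable {p : List (ℤ × ℤ)} {s t v w : ℤ × ℤ}

theorem length_pos (hp : IsPathFT p s t) : 0 < p.length := by
  rcases p with _ | ⟨x, l⟩
  · simp [IsPathFT] at hp
  · simp

theorem getElem_zero (hp : IsPathFT p s t) : p[0]'hp.length_pos = s := by
  obtain ⟨l, hl⟩ := List.head?_eq_some_iff.1 hp.1
  simp [hl]

theorem getElem_last (hp : IsPathFT p s t) :
    p[p.length - 1]'(Nat.sub_lt hp.length_pos one_pos) = t := by
  obtain ⟨l, hl⟩ := List.getLast?_eq_some_iff.1 hp.2.1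
  simp [hl]

theorem isStep_getElem (hp : IsPathFT p s t) {i : ℕ} (hi : i + 1 < p.length) :
    IsStep p[i] p[i + 1] :=
  List.isChain_iff_getElem.1 hp.2.2 i hi

theorem diag_getElem (hp : IsPathFT p s t) {i : ℕ} (hi : i < p.length) :
    diag p[i] = diag s + i := by
  induction i with
  | zero => simp [hp.getElem_zero]
  | succ i ih => rw [(hp.isStep_getElem hi).diag_eq, ih (by omega)]; push_cast; ring

theorem length_eq (hp : IsPathFT p s t) : (p.length : ℤ) = diag t - diag s + 1 := by
  have := hp.diag_getElem (Nat.sub_lt hp.length_pos one_pos)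
  rw [hp.getElem_last] at this
  have := hp.length_pos
  omega

theorem getElem_mono (hp : IsPathFT p s t) {i j : ℕ} (hij : i ≤ j) (hj : j < p.length) :
    p[j].1 ≤ p[i].1 ∧ p[i].2 ≤ p[j].2 := by
  induction j, hij using Nat.le_induction with
  | base => simp
  | succ j hij ih =>
    have := ih (by omega)
    rcases hp.isStep_getElem hj with h | h <;> rw [h] <;> omega

theorem bounds (hp : IsPathFT p s t) (hv : v ∈ p) :
    t.1 ≤ v.1 ∧ v.1 ≤ s.1 ∧ s.2 ≤ v.2 ∧ v.2 ≤ t.2 := by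
  obtain ⟨i, hi, rfl⟩ := List.getElem_of_mem hv
  have h0 := hp.getElem_mono (Nat.zero_le i) hi
  have h1 := hp.getElem_mono (Nat.le_sub_one_of_lt hi) (Nat.sub_lt hp.length_pos one_pos)
  rw [hp.getElem_zero] at h0
  rw [hp.getElem_last] at h1
  omega

theorem diag_bounds (hp : IsPathFT p s t) (hv : v ∈ p) : diag s ≤ diag v ∧ diag v ≤ diag t := by
  have := hp.bounds hv
  simp only [diag]
  omega

theorem pairwise_diag_lt (hp : IsPathFT p s t) : p.Pairwise (diag · < diag ·) :=
  List.pairwise_iff_getElem.2 fun i j hi hj hij => by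
    rw [hp.diag_getElem hi, hp.diag_getElem hj]
    omega

theorem eq_of_diag_eq (hp : IsPathFT p s t) (hv : v ∈ p) (hw : w ∈ p) (h : diag v = diag w) :
    v = w := by
  obtain ⟨i, hi, rfl⟩ := List.getElem_of_mem hv
  obtain ⟨j, hj, rfl⟩ := List.getElem_of_mem hw
  rw [hp.diag_getElem hi, hp.diag_getElem hj] at h
  obtain rfl : i = j := by exact_mod_cast add_left_cancel h
  rfl

theorem exists_mem_diag (hp : IsPathFT p s t) {d : ℤ} (h₁ : diag s ≤ d) (h₂ : d ≤ diag t) :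
    ∃ v ∈ p, diag v = d := by
  have hlen := hp.length_eq
  have hi : (d - diag s).toNat < p.length := by omega
  refine ⟨p[_]'hi, List.getElem_mem hi, ?_⟩
  rw [hp.diag_getElem hi]
  omega

theorem isStep_of_diag_eq (hp : IsPathFT p s t) (hv : v ∈ p) (hw : w ∈ p)
    (h : diag w = diag v + 1) : IsStep v w := by
  obtain ⟨i, hi, rfl⟩ := List.getElem_of_mem hv
  obtain ⟨j, hj, rfl⟩ := List.getElem_of_mem hw
  rw [hp.diag_getElem hi, hp.diag_getElem hj] at h
  obtain rfl : j = i + 1 := by omega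
  exact hp.isStep_getElem hj

theorem start_mem (hp : IsPathFT p s t) : s ∈ p :=
  hp.getElem_zero ▸ List.getElem_mem _

theorem finish_mem (hp : IsPathFT p s t) : t ∈ p :=
  hp.getElem_last ▸ List.getElem_mem _

theorem exists_prev (hp : IsPathFT p s t) (hv : v ∈ p) (hs : v ≠ s) : ∃ u ∈ p, IsStep u v := by
  have hsv : diag s ≠ diag v := fun h => hs (hp.eq_of_diag_eq hp.start_mem hv h).symm
  have := hp.diag_bounds hv
  obtain ⟨u, hu, hdu⟩ := hp.exists_mem_diag (d := diag v - 1) (by omega) (by omega)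
  exact ⟨u, hu, hp.isStep_of_diag_eq hu hv (by omega)⟩

theorem exists_next (hp : IsPathFT p s t) (hv : v ∈ p) (ht : v ≠ t) : ∃ w ∈ p, IsStep v w := by
  have htv : diag v ≠ diag t := fun h => ht (hp.eq_of_diag_eq hv hp.finish_mem h)
  have := hp.diag_bounds hv
  obtain ⟨w, hw, hdw⟩ := hp.exists_mem_diag (d := diag v + 1) (by omega) (by omega)
  exact ⟨w, hw, hp.isStep_of_diag_eq hv hw hdw⟩

end IsPathFT

def kthSmallest (γ : Finset ℕ) (k : ℕ) : ℤ := ((γ.sort (· ≤ ·)).getD k 0 : ℕ)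

theorem kthSmallest_bounds {γ : Finset ℕ} {c k : ℕ} (hγ : γ ⊆ Finset.Icc 1 c)
    (hk : k < γ.card) : 1 ≤ kthSmallest γ k ∧ kthSmallest γ k ≤ c := by
  have hk' : k < (γ.sort (· ≤ ·)).length := by rwa [Finset.length_sort]
  have hmem := Finset.mem_Icc.1 <| hγ <| (Finset.mem_sort _).1 <|
    (List.getD_eq_getElem _ 0 hk').symm ▸ List.getElem_mem hk'
  simp only [kthSmallest]
  omega

theorem kthSmallest_lt_kthSmallest {γ : Finset ℕ} {k j : ℕ} (hkj : k < j) (hj : j < γ.card) :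
    kthSmallest γ k < kthSmallest γ j := by
  have hj' : j < (γ.sort (· ≤ ·)).length := by rwa [Finset.length_sort]
  have := List.pairwise_iff_getElem.1 (Finset.sortedLT_sort γ).pairwise k j (by omega) hj' hkj
  simp only [kthSmallest, List.getD_eq_getElem _ 0 hj', List.getD_eq_getElem _ 0 (hkj.trans hj')]
  exact_mod_cast this

theorem passCount_eq_sum {P : List (List (ℤ × ℤ))} {v : ℤ × ℤ} {k : ℕ}
    (hhigh : ∀ j, k < j → v ∉ P.getD j []) :
    passCount P v = ∑ j ∈ Finset.range (k + 1), if v ∈ P.getD j [] then 1 else 0 := by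
  rw [← Finset.card_filter, passCount, ← Set.ncard_coe_finset]
  congr 1
  ext j
  simp only [Finset.coe_filter, Finset.mem_range, Set.mem_ofPred_eq]
  constructor
  · rintro ⟨-, hj⟩
    exact ⟨by_contra fun hjk => hhigh j (by omega) hj, hj⟩
  · rintro ⟨-, hj⟩
    exact ⟨List.lt_length_of_mem_getD hj, hj⟩

namespace IsOscTuple

variable {a b : ℕ} {α β α' β' : Finset ℕ} {P P' : List (List (ℤ × ℤ))} {i j k : ℕ} {v w : ℤ × ℤ}

theorem isPathFT (h : IsOscTuple a b α β P) (hk : k < P.length) :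
    IsPathFT (P.getD k []) ((a : ℤ), kthSmallest β k) (kthSmallest α k, (b : ℤ)) :=
  h.2.2.2.2.1 k hk

theorem card_α (h : IsOscTuple a b α β P) : α.card = P.length := h.2.2.2.1.symm

theorem card_β (h : IsOscTuple a b α β P) : β.card = P.length := h.2.2.1 ▸ h.card_α

theorem kthSmallest_start_bounds (h : IsOscTuple a b α β P) (hk : k < P.length) :
    1 ≤ kthSmallest β k ∧ kthSmallest β k ≤ b :=
  kthSmallest_bounds h.2.1 (h.card_β ▸ hk)

theorem kthSmallest_finish_bounds (h : IsOscTuple a b α β P) (hk : k < P.length) :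
    1 ≤ kthSmallest α k ∧ kthSmallest α k ≤ a :=
  kthSmallest_bounds h.1 (h.card_α ▸ hk)

theorem kthSmallest_start_lt (h : IsOscTuple a b α β P) (hkj : k < j) (hj : j < P.length) :
    kthSmallest β k < kthSmallest β j :=
  kthSmallest_lt_kthSmallest hkj (h.card_β ▸ hj)

theorem kthSmallest_finish_lt (h : IsOscTuple a b α β P) (hkj : k < j) (hj : j < P.length) :
    kthSmallest α k < kthSmallest α j :=
  kthSmallest_lt_kthSmallest hkj (h.card_α ▸ hj)

theorem mem_rectZ (h : IsOscTuple a b α β P) (hv : v ∈ P.getD k []) : v ∈ rectZ a b := by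
  have hk := List.lt_length_of_mem_getD hv
  have := (h.isPathFT hk).bounds hv
  have := h.kthSmallest_start_bounds hk
  have := h.kthSmallest_finish_bounds hk
  simp only [rectZ, Set.mem_ofPred_eq]
  omega

theorem exists_mem_diag_of_lt (h : IsOscTuple a b α β P) (hkj : k < j) (hw : w ∈ P.getD j [])
    {d : ℤ} (hd₁ : diag w - 1 ≤ d) (hd₂ : d ≤ diag w) : ∃ v ∈ P.getD k [], diag v = d := by
  have hj := List.lt_length_of_mem_getD hw
  have hw' := (h.isPathFT hj).diag_bounds hw
  have hβ := h.kthSmallest_start_lt hkj hj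
  have hα := h.kthSmallest_finish_lt hkj hj
  simp only [diag] at hw' hd₁ hd₂
  exact (h.isPathFT (hkj.trans hj)).exists_mem_diag (by simp only [diag]; omega)
    (by simp only [diag]; omega)

theorem north_mem_of_osc (h : IsOscTuple a b α β P) (hv : v ∈ P.getD k [])
    (hv' : v ∈ P.getD (k + 1) []) : (v.1 - 1, v.2) ∈ P.getD k [] := by
  obtain ⟨l, hl, rfl⟩ := List.getElem_of_mem hv
  obtain ⟨l', hl', hlv'⟩ := List.getElem_of_mem hv'
  obtain ⟨-, hl1, -, hN, -⟩ := h.2.2.2.2.2 k (List.lt_length_of_mem_getD hv') l l' hl hl'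
    (by rw [List.getD_eq_getElem _ _ hl, List.getD_eq_getElem _ _ hl', hlv'])
  rw [List.getD_eq_getElem _ _ hl, List.getD_eq_getElem _ _ hl1] at hN
  exact hN ▸ List.getElem_mem hl1

theorem east_mem_of_osc (h : IsOscTuple a b α β P) (hv : v ∈ P.getD k [])
    (hv' : v ∈ P.getD (k + 1) []) (hne : v ≠ (kthSmallest α (k + 1), (b : ℤ))) :
    (v.1, v.2 + 1) ∈ P.getD (k + 1) [] := by
  have hp := h.isPathFT (List.lt_length_of_mem_getD hv')
  obtain ⟨l, hl, hlv⟩ := List.getElem_of_mem hv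
  obtain ⟨l', hl', rfl⟩ := List.getElem_of_mem hv'
  obtain ⟨-, -, -, -, -, hE⟩ := h.2.2.2.2.2 k (List.lt_length_of_mem_getD hv') l l' hl hl'
    (by rw [List.getD_eq_getElem _ _ hl, List.getD_eq_getElem _ _ hl', hlv])
  have hl1 : l' + 1 < (P.getD (k + 1) []).length := by
    by_contra hlast
    exact hne (by convert hp.getElem_last using 2; omega)
  rw [List.getD_eq_getElem _ _ hl, hlv, List.getD_eq_getElem _ _ hl1] at hE
  exact hE hl1 ▸ List.getElem_mem hl1

/- Induction along the diagonals, starting where path `k + 1` leaves the bottom row: where the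
two paths meet, path `k` turns north, so it stays weakly above path `k + 1`. -/
theorem fst_le_of_mem_succ (h : IsOscTuple a b α β P) (hv : v ∈ P.getD k [])
    (hw : w ∈ P.getD (k + 1) []) (hd : diag v = diag w) : v.1 ≤ w.1 := by
  have hk1 := List.lt_length_of_mem_getD hw
  have hp := h.isPathFT hk1
  have hp₀ := h.isPathFT (Nat.lt_of_succ_lt hk1)
  have hβ := h.kthSmallest_start_lt (Nat.lt_add_one k) hk1
  obtain ⟨n, hn⟩ : ∃ n : ℕ, diag w = kthSmallest β (k + 1) - a + n := by
    have := (hp.diag_bounds hw).1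
    exact ⟨(diag w - (kthSmallest β (k + 1) - a)).toNat, by simp only [diag] at *; omega⟩
  induction n generalizing v w with
  | zero =>
    obtain rfl := hp.eq_of_diag_eq hw hp.start_mem (by simp only [diag] at *; omega)
    exact (hp₀.bounds hv).2.1
  | succ n ih =>
    obtain ⟨w', hw', hw'w⟩ := hp.exists_prev hw (by rintro rfl; simp only [diag] at hn; omega)
    obtain ⟨v', hv', hv'v⟩ := hp₀.exists_prev hv (by rintro rfl; simp only [diag] at hn hd; omega)
    have hdv := hv'v.diag_eq
    have hdw := hw'w.diag_eq
    have ih' := ih hv' hw' (by omega) (by push_cast at hn; omega)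
    rcases ih'.lt_or_eq with hlt | heq
    · rcases hv'v with rfl | rfl <;> rcases hw'w with rfl | rfl <;> dsimp only <;> omega
    · obtain rfl : v' = w' := Prod.ext heq (by simp only [diag] at *; omega)
      obtain rfl := hp₀.eq_of_diag_eq hv (h.north_mem_of_osc hv' hw')
        (by simp only [diag] at *; omega)
      rcases hw'w with rfl | rfl <;> dsimp only <;> omega

theorem fst_le_of_lt (h : IsOscTuple a b α β P) (hkj : k < j) (hv : v ∈ P.getD k [])
    (hw : w ∈ P.getD j []) (hd : diag v = diag w) : v.1 ≤ w.1 := by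
  induction j, hkj using Nat.le_induction generalizing w with
  | base => exact h.fst_le_of_mem_succ hv hw hd
  | succ j hkj ih =>
    obtain ⟨x, hx, hdx⟩ := h.exists_mem_diag_of_lt (Nat.lt_add_one j) hw (d := diag w)
      (by omega) le_rfl
    exact (ih hx (hd.trans hdx.symm)).trans (h.fst_le_of_mem_succ hx hw hdx)

theorem north_not_mem_of_osc (h : IsOscTuple a b α β P) (hv : v ∈ P.getD k [])
    (hv' : v ∈ P.getD (k + 1) []) : (v.1 - 1, v.2) ∉ P.getD (k + 1) [] := by
  intro hN
  have hp := h.isPathFT (List.lt_length_of_mem_getD hv')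
  have hne : v ≠ (kthSmallest α (k + 1), (b : ℤ)) := by
    rintro rfl
    have := (hp.diag_bounds hN).2
    simp only [diag] at this
    omega
  have := hp.eq_of_diag_eq hN (h.east_mem_of_osc hv hv' hne) (by simp only [diag]; ring)
  simp only [Prod.mk.injEq] at this
  omega

theorem mem_getD_of_le_of_le (h : IsOscTuple a b α β P) (hv : v ∈ P.getD k [])
    (hv' : v ∈ P.getD j []) (hki : k ≤ i) (hij : i ≤ j) : v ∈ P.getD i [] := by
  rcases hij.lt_or_eq with hij | rfl
  · rcases hki.lt_or_eq with hki | rfl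
    · obtain ⟨x, hx, hdx⟩ := h.exists_mem_diag_of_lt hij hv' (d := diag v) (by omega) le_rfl
      have h₁ := h.fst_le_of_lt hki hv hx hdx.symm
      have h₂ := h.fst_le_of_lt hij hx hv' hdx
      obtain rfl : x = v := Prod.ext (by omega) (by simp only [diag] at hdx; omega)
      exact hx
    · exact hv
  · exact hv'

/- Otherwise path `k + 1` passes through `v` too, and would have to leave it both north (as the
earlier path of an osculation) and east (as the later one). -/
theorem eq_succ_of_mem_of_mem (h : IsOscTuple a b α β P) (hv : v ∈ P.getD k [])
    (hv' : v ∈ P.getD j []) (hkj : k < j) : j = k + 1 := by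
  by_contra hne
  have h₁ := h.mem_getD_of_le_of_le hv hv' (Nat.le_add_right k 1) (by omega)
  have h₂ := h.mem_getD_of_le_of_le hv hv' (Nat.le_add_right k 2) (by omega)
  exact h.north_not_mem_of_osc hv h₁ (h.north_mem_of_osc h₁ h₂)

theorem passCount_le_two (h : IsOscTuple a b α β P) (v : ℤ × ℤ) : passCount P v ≤ 2 := by
  by_contra! hc
  obtain ⟨i, hi, j, hj, l, hl, hij, hil, hjl⟩ :=
    (Set.two_lt_ncard ((Set.finite_lt_nat P.length).subset fun _ hx => hx.1)).1 hc
  have adj : ∀ {x y : ℕ}, v ∈ P.getD x [] → v ∈ P.getD y [] → x ≠ y →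
      x = y + 1 ∨ y = x + 1 := by
    intro x y hx hy hxy
    rcases hxy.lt_or_gt with hlt | hlt
    · exact .inr (h.eq_succ_of_mem_of_mem hx hy hlt)
    · exact .inl (h.eq_succ_of_mem_of_mem hy hx hlt)
  have := adj hi.2 hj.2 hij
  have := adj hi.2 hl.2 hil
  have := adj hj.2 hl.2 hjl
  omega

theorem north_not_mem_of_lt (h : IsOscTuple a b α β P) (hv : v ∈ P.getD k []) (hkj : k < j) :
    (v.1 - 1, v.2) ∉ P.getD j [] := by
  intro hu
  have hp := h.isPathFT (List.lt_length_of_mem_getD hu)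
  have hva := ((h.isPathFT (List.lt_length_of_mem_getD hv)).bounds hv).2.1
  obtain ⟨w, hw, hwu⟩ := hp.exists_prev hu (by simp only [ne_eq, Prod.mk.injEq]; omega)
  rcases hwu with hwu | hwu <;> simp only [Prod.mk.injEq] at hwu
  · have := h.fst_le_of_lt hkj hv hw (by simp only [diag]; omega)
    omega
  · obtain rfl : w = v := Prod.ext (by omega) (by omega)
    obtain rfl := h.eq_succ_of_mem_of_mem hv hw hkj
    exact h.north_not_mem_of_osc hv hw hu

theorem pairwise_diag_lt_getD (h : IsOscTuple a b α β P) (k : ℕ) :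
    (P.getD k []).Pairwise (diag · < diag ·) := by
  by_cases hk : k < P.length
  · exact (h.isPathFT hk).pairwise_diag_lt
  · rw [List.getD_eq_default _ _ (not_lt.1 hk)]
    exact List.Pairwise.nil

theorem getD_eq_nil_iff (h : IsOscTuple a b α β P) : P.getD k [] = [] ↔ P.length ≤ k :=
  ⟨fun hk => not_lt.1 fun hlt => (h.isPathFT hlt).length_pos.ne' (by rw [hk, List.length_nil]),
    List.getD_eq_default _ _⟩

theorem eq_of_forall_mem_iff (h : IsOscTuple a b α β P)
    (h' : IsOscTuple a b α' β' P') (hmem : ∀ k v, v ∈ P.getD k [] ↔ v ∈ P'.getD k []) :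
    P = P' := by
  have : Std.Irrefl fun v w : ℤ × ℤ => diag v < diag w := ⟨fun _ => lt_irrefl _⟩
  have hpath (k : ℕ) : P.getD k [] = P'.getD k [] :=
    (h.pairwise_diag_lt_getD k).eq_of_mem_iff (h'.pairwise_diag_lt_getD k) (hmem k)
  have hlen : P.length = P'.length := le_antisymm
    (h.getD_eq_nil_iff.1 ((hpath _).trans (h'.getD_eq_nil_iff.2 le_rfl)))
    (h'.getD_eq_nil_iff.1 ((hpath _).symm.trans (h.getD_eq_nil_iff.2 le_rfl)))
  refine List.ext_getElem hlen fun k hk hk' => ?_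
  rw [← List.getD_eq_getElem _ [] hk, ← List.getD_eq_getElem _ [] hk', hpath]

end IsOscTuple

def AgreeOnDiag (P P' : List (List (ℤ × ℤ))) (d : ℤ) : Prop :=
  ∀ k v, diag v = d → (v ∈ P.getD k [] ↔ v ∈ P'.getD k [])

section TwoTuples

variable {a b : ℕ} {α β α' β' : Finset ℕ} {P P' : List (List (ℤ × ℤ))} {k : ℕ} {w : ℤ × ℤ}

/- As at most two paths pass through `w`, its membership in `Z` records the parity of its pass
count. -/
theorem mem_iff_of_Zset_eq (h : IsOscTuple a b α β P) (h' : IsOscTuple a b α' β' P')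
    (hZ : Zset a b P = Zset a b P') (hw : w ∈ rectZ a b)
    (hlow : ∀ j < k, w ∈ P.getD j [] ↔ w ∈ P'.getD j [])
    (hhigh : ∀ j, k < j → w ∉ P.getD j []) (hhigh' : ∀ j, k < j → w ∉ P'.getD j []) :
    w ∈ P.getD k [] ↔ w ∈ P'.getD k [] := by
  have hc := h.passCount_le_two w
  have hc' := h'.passCount_le_two w
  have hZw : (passCount P w = 0 ∨ passCount P w = 2) ↔
      (passCount P' w = 0 ∨ passCount P' w = 2) := by
    simpa [Zset, hw] using Set.ext_iff.1 hZ w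
  have hS : (∑ j ∈ Finset.range k, if w ∈ P.getD j [] then 1 else 0) =
      ∑ j ∈ Finset.range k, if w ∈ P'.getD j [] then 1 else 0 :=
    Finset.sum_congr rfl fun j hj => by simp only [hlow j (Finset.mem_range.1 hj)]
  rw [passCount_eq_sum hhigh, Finset.sum_range_succ, hS] at hc hZw
  rw [passCount_eq_sum hhigh', Finset.sum_range_succ] at hc' hZw
  by_cases hx : w ∈ P.getD k [] <;> by_cases hx' : w ∈ P'.getD k [] <;>
    simp only [hx, hx', if_true, if_false] at hc hc' hZw <;> simp only [hx, hx'] <;> omega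

theorem mem_of_mem_of_agreeOnDiag (h : IsOscTuple a b α β P) (h' : IsOscTuple a b α' β' P')
    (hZ : Zset a b P = Zset a b P') {d : ℤ} (hprev : AgreeOnDiag P P' d)
    (hlow : ∀ j < k, ∀ v, diag v = d + 1 → (v ∈ P.getD j [] ↔ v ∈ P'.getD j []))
    (hw : w ∈ P.getD k []) (hdw : diag w = d + 1) : w ∈ P'.getD k [] := by
  by_cases hmeet : ∃ v ∈ P.getD k [], diag v = d
  · obtain ⟨v, hv, hdv⟩ := hmeet
    have hv' := (hprev k v hdv).1 hv
    have hp := h.isPathFT (List.lt_length_of_mem_getD hv)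
    have hp' := h'.isPathFT (List.lt_length_of_mem_getD hv')
    have hnorth : (v.1 - 1, v.2) ∈ P.getD k [] ↔ (v.1 - 1, v.2) ∈ P'.getD k [] := by
      by_cases hu : (v.1 - 1, v.2) ∈ rectZ a b
      · exact mem_iff_of_Zset_eq h h' hZ hu
          (fun j hj => hlow j hj _ (by simp only [diag] at hdv ⊢; omega))
          (fun j hj => h.north_not_mem_of_lt hv hj) (fun j hj => h'.north_not_mem_of_lt hv' hj)
      · exact iff_of_false (fun hu' => hu (h.mem_rectZ hu')) (fun hu' => hu (h'.mem_rectZ hu'))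
    rcases hp.isStep_of_diag_eq hv hw (by omega) with rfl | rfl
    · have hN : (v.1 - 1, v.2) ∉ P.getD k [] := fun hN => by
        have := hp.eq_of_diag_eq hN hw (by simp only [diag]; ring)
        simp only [Prod.mk.injEq] at this
        omega
      have hb : v.2 < b := by
        have := h.mem_rectZ hw
        simp only [rectZ, Set.mem_ofPred_eq] at this
        omega
      obtain ⟨x, hx, hvx⟩ := hp'.exists_next hv' (by rintro rfl; exact lt_irrefl _ hb)
      rcases hvx with rfl | rfl
      · exact hx
      · exact absurd (hnorth.2 hx) hN
    · exact hnorth.1 hw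
  · refine (mem_iff_of_Zset_eq h h' hZ (h.mem_rectZ hw) (fun j hj => hlow j hj w hdw) ?_ ?_).1 hw
    · intro j hj hwj
      exact hmeet (h.exists_mem_diag_of_lt hj hwj (by omega) (by omega))
    · intro j hj hwj
      obtain ⟨v, hv, hdv⟩ := h'.exists_mem_diag_of_lt hj hwj (d := d) (by omega) (by omega)
      exact hmeet ⟨v, (hprev k v hdv).2 hv, hdv⟩

theorem agreeOnDiag_succ (h : IsOscTuple a b α β P) (h' : IsOscTuple a b α' β' P')
    (hZ : Zset a b P = Zset a b P') {d : ℤ} (hd : AgreeOnDiag P P' d) :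
    AgreeOnDiag P P' (d + 1) := by
  intro k
  induction k using Nat.strong_induction_on with
  | _ k ih =>
    intro v hv
    exact ⟨(mem_of_mem_of_agreeOnDiag h h' hZ hd ih · hv),
      (mem_of_mem_of_agreeOnDiag h' h hZ.symm (fun j v hv => (hd j v hv).symm)
        (fun j hj v hv => (ih j hj v hv).symm) · hv)⟩

theorem agreeOnDiag_of_Zset_eq (h : IsOscTuple a b α β P) (h' : IsOscTuple a b α' β' P')
    (hZ : Zset a b P = Zset a b P') (d : ℤ) : AgreeOnDiag P P' d := by
  have low : ∀ d ≤ -(a : ℤ), AgreeOnDiag P P' d := by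
    intro d hd k v hv
    have hv' : v ∉ rectZ a b := by simp only [rectZ, Set.mem_ofPred_eq, diag] at hv ⊢; omega
    exact iff_of_false (fun hm => hv' (h.mem_rectZ hm)) (fun hm => hv' (h'.mem_rectZ hm))
  obtain hd | hd := le_or_gt d (-(a : ℤ))
  · exact low d hd
  · exact Int.leInduction (motive := fun d _ => AgreeOnDiag P P' d) (low _ le_rfl)
      (fun _ _ ih => agreeOnDiag_succ h h' hZ ih) d hd.le

end TwoTuples

theorem statement14_general (a b : ℕ)
    (α β α' β' : Finset ℕ) (P P' : List (List (ℤ × ℤ)))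
    (h : IsOscTuple a b α β P) (h' : IsOscTuple a b α' β' P')
    (hZ : Zset a b P = Zset a b P') : P = P' :=
  h.eq_of_forall_mem_iff h' fun k v => agreeOnDiag_of_Zset_eq h h' hZ (diag v) k v rfl

/-- A tuple of osculating paths is uniquely determined by its vacancy-osculation set. -/
theorem statement14 (a b : ℕ) (ha : 0 < a) (hb : 0 < b)
    (α β α' β' : Finset ℕ) (P P' : List (List (ℤ × ℤ)))
    (h : IsOscTuple a b α β P) (h' : IsOscTuple a b α' β' P')
    (hZ : Zset a b P = Zset a b P') : P = P' :=
  statement14_general a b α β α' β' P P' h h' hZ
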